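/- arXiv:2006.11224 — 11 statements merged into one kernel-verified Lean document; each statement's English description precedes it below -/
import Mathlib

section
/- Let (X,d,f) be a dynamical system with f uniformly continuous, let (X̂,d̂) be the completion of (X,d), and let f̂ be the unique uniformly continuous extension of f to X̂. If (X,d,f) has the shadowing property, then (X̂,d̂,f̂) has the shadowing property. -/
/-- The shadowing property for a map of a metric space. -/
def Shadowing {X : Type*} [PseudoMetricSpace X] (f : X → X) : Prop :=
  ∀ ε > (0 : ℝ), ∃ δ > (0 : ℝ), ∀ x : ℕ → X,
    (∀ n, dist (f (x n)) (x (n + 1)) < δ) →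
      ∃ z, ∀ n, dist (f^[n] z) (x n) < ε

open UniformSpace

lemma completion_map_iterate {X : Type*} [MetricSpace X] (f : X → X)
    (hf : UniformContinuous f) (z : X) (n : ℕ) :
    (Completion.map f)^[n] (z : Completion X) = ((f^[n] z : X) : Completion X) := by
  induction n with
  | zero => simp
  | succ n ih =>
    rw [Function.iterate_succ_apply', ih, Completion.map_coe hf,
      Function.iterate_succ_apply']

/-- If `(X,d,f)` is a dynamical system with `f` uniformly continuous and with the shadowing
property, then the extension `f̂` of `f` to the completion `(X̂, d̂)` has the
shadowing property. -/
theorem shadowing_completion {X : Type*} [MetricSpace X] (f : X → X)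
    (hf : UniformContinuous f) (hsh : Shadowing f) :
    Shadowing (UniformSpace.Completion.map f) := by
  intro ε hε
  obtain ⟨δ, hδ, hδsh⟩ := hsh (ε / 2) (by linarith)
  -- uniform continuity of the extension
  have hmapUC : UniformContinuous (Completion.map f) := Completion.uniformContinuous_map
  obtain ⟨η, hη, hηc⟩ := Metric.uniformContinuous_iff.1 hmapUC (δ / 3) (by linarith)
  set γ := min η (min (δ / 3) (ε / 2)) with hγdef
  have hγ : 0 < γ := lt_min hη (lt_min (by linarith) (by linarith))
  refine ⟨δ / 3, by linarith, ?_⟩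
  intro x hx
  -- approximate each x n by a point of X within γ
  have happrox : ∀ n : ℕ, ∃ y : X, dist ((y : Completion X)) (x n) < γ := by
    intro n
    have : (x n) ∈ closure (Set.range ((↑) : X → Completion X)) := by
      rw [Completion.denseRange_coe.closure_range]; trivial
    obtain ⟨p, hp, hpd⟩ := Metric.mem_closure_iff.1 this γ hγ
    obtain ⟨y, rfl⟩ := hp
    exact ⟨y, by rwa [dist_comm] at hpd⟩
  choose y hy using happrox
  have hγη : γ ≤ η := min_le_left _ _
  have hγδ : γ ≤ δ / 3 := le_trans (min_le_right _ _) (min_le_left _ _)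
  have hγε : γ ≤ ε / 2 := le_trans (min_le_right _ _) (min_le_right _ _)
  -- y is a δ-pseudo-orbit in X
  have hyp : ∀ n, dist (f (y n)) (y (n + 1)) < δ := by
    intro n
    have h1 : dist ((f (y n) : Completion X)) (Completion.map f (x n)) < δ / 3 := by
      rw [← Completion.map_coe hf]
      exact hηc (lt_of_lt_of_le (hy n) hγη)
    have h2 : dist (Completion.map f (x n)) (x (n + 1)) < δ / 3 := hx n
    have h3 : dist (x (n + 1)) ((y (n + 1) : Completion X)) < δ / 3 := by
      rw [dist_comm]; exact lt_of_lt_of_le (hy (n + 1)) hγδ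
    have := dist_triangle4 ((f (y n) : Completion X)) (Completion.map f (x n))
      (x (n + 1)) ((y (n + 1) : Completion X))
    have hdd : dist ((f (y n) : Completion X)) ((y (n + 1) : Completion X)) < δ := by
      linarith
    rwa [Completion.dist_eq] at hdd
  obtain ⟨z, hz⟩ := hδsh y hyp
  refine ⟨(z : Completion X), fun n => ?_⟩
  have h1 : dist ((Completion.map f)^[n] (z : Completion X)) ((y n : Completion X)) < ε / 2 := by
    rw [completion_map_iterate f hf, Completion.dist_eq]
    exact hz n
  have h2 : dist ((y n : Completion X)) (x n) < ε / 2 := lt_of_lt_of_le (hy n) hγε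
  calc dist ((Completion.map f)^[n] (z : Completion X)) (x n)
      ≤ _ + _ := dist_triangle _ ((y n : Completion X)) _
    _ < ε / 2 + ε / 2 := add_lt_add h1 h2
    _ = ε := by ring
end

section
/- Let A be a countable alphabet and X ⊆ A^ℕ a shift space. If X is a shift of finite order (i.e., of order p for some p ∈ ℕ), then the shift map σ on X, with respect to the metric d(x,y) = 1/(i+1) where i is the least index at which x and y differ, has the shadowing property. -/
/-- The standard metric on `A^ℕ`: `d(x,y) = 1/(i+1)` where `i` is the least index at which
`x` and `y` differ, and `0` if `x = y`. -/
noncomputable def shiftDist {A : Type*} (x y : ℕ → A) : ℝ := by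
  classical
  exact if h : x = y then 0 else ((Nat.find (Function.ne_iff.mp h) : ℝ) + 1)⁻¹

/-- The shift map on `A^ℕ`. -/
def shiftMap {A : Type*} (x : ℕ → A) : ℕ → A := fun n => x (n + 1)

/-- `X ⊆ A^ℕ` has order `p` if it is determined by a set of forbidden words of length `p`. -/
def HasOrder {A : Type*} (X : Set (ℕ → A)) (p : ℕ) : Prop :=
  ∃ F : Set (Fin p → A), X = {x | ∀ i : ℕ, (fun j : Fin p => x (i + (j : ℕ))) ∉ F}

lemma shiftDist_lt_agree {A : Type*} {x y : ℕ → A} {M : ℕ}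
    (h : shiftDist x y < ((M : ℝ) + 1)⁻¹) : ∀ j ≤ M, x j = y j := by
  classical
  intro j hj
  unfold shiftDist at h
  split_ifs at h with heq
  · rw [heq]
  · by_contra hne
    have h1 : ((M : ℝ) + 1) < (Nat.find (Function.ne_iff.mp heq) : ℝ) + 1 :=
      (inv_lt_inv₀ (by positivity) (by positivity)).mp h
    have h2 : M < Nat.find (Function.ne_iff.mp heq) := by
      have h3 : (M : ℝ) < (Nat.find (Function.ne_iff.mp heq) : ℝ) := by linarith
      exact_mod_cast h3
    exact Nat.find_min (Function.ne_iff.mp heq) (lt_of_le_of_lt hj h2) hne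

lemma shiftDist_le_of_agree {A : Type*} {x y : ℕ → A} {M : ℕ}
    (h : ∀ j ≤ M, x j = y j) : shiftDist x y ≤ ((M : ℝ) + 2)⁻¹ := by
  classical
  unfold shiftDist
  split_ifs with heq
  · positivity
  · have hfind : M + 1 ≤ Nat.find (Function.ne_iff.mp heq) := by
      by_contra hlt
      push_neg at hlt
      exact Nat.find_spec (Function.ne_iff.mp heq) (h _ (Nat.lt_succ_iff.mp hlt))
    have : ((M : ℝ) + 2) ≤ (Nat.find (Function.ne_iff.mp heq) : ℝ) + 1 := by
      have : ((M : ℕ) + 1 : ℝ) ≤ (Nat.find (Function.ne_iff.mp heq) : ℝ) := by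
        exact_mod_cast hfind
      push_cast at this ⊢
      linarith
    exact inv_anti₀ (by positivity) this

lemma shiftMap_iterate {A : Type*} (i : ℕ) : ∀ (z : ℕ → A) (n : ℕ),
    (shiftMap^[i] z) n = z (n + i) := by
  induction i with
  | zero => intro z n; simp
  | succ i ih =>
    intro z n
    rw [Function.iterate_succ_apply, ih (shiftMap z) n]
    show z (n + i + 1) = z (n + (i + 1))
    ring_nf

/-- If a shift space `X ⊆ A^ℕ` over a countable alphabet has finite order, then the
shift map on `X` has the shadowing property (with respect to the metric `d(x,y)=1/(i+1)`). -/
theorem shadowing_of_finite_order {A : Type*} [Countable A]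
    [TopologicalSpace A] [DiscreteTopology A]
    (X : Set (ℕ → A)) (hXclosed : IsClosed X)
    (hXinv : ∀ x ∈ X, shiftMap x ∈ X)
    (horder : ∃ p : ℕ, HasOrder X p) :
    ∀ ε > (0 : ℝ), ∃ δ > (0 : ℝ), ∀ x : ℕ → (ℕ → A),
      (∀ i, x i ∈ X) →
      (∀ i, shiftDist (shiftMap (x i)) (x (i + 1)) < δ) →
      ∃ z ∈ X, ∀ i : ℕ, shiftDist (shiftMap^[i] z) (x i) < ε := by
  obtain ⟨p, F, hF⟩ := horder
  intro ε hε
  obtain ⟨N, hN⟩ := exists_nat_one_div_lt hε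
  set M : ℕ := max N p with hM
  refine ⟨((M : ℝ) + 1)⁻¹, by positivity, ?_⟩
  intro x hxX hd
  -- agreement along the pseudo-orbit
  have hchain : ∀ i j, j ≤ M → x (i + 1) j = x i (j + 1) := by
    intro i j hj
    exact (shiftDist_lt_agree (hd i) j hj).symm
  have key : ∀ k i j, j + k ≤ M + 1 → x (i + k) j = x i (j + k) := by
    intro k
    induction k with
    | zero => intro i j _; simp
    | succ k ih =>
      intro i j hjk
      have h1 : x (i + (k + 1)) j = x (i + 1) (j + k) := by
        have : i + (k + 1) = (i + 1) + k := by ring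
        rw [this]
        exact ih (i + 1) j (by omega)
      rw [h1, hchain i (j + k) (by omega)]
      ring_nf
  set z : ℕ → A := fun n => x n 0 with hz
  have hzX : z ∈ X := by
    rw [hF]
    intro i
    have : (fun j : Fin p => z (i + (j : ℕ))) = fun j : Fin p => x i (0 + (j : ℕ)) := by
      funext j
      show x (i + (j : ℕ)) 0 = x i (0 + (j : ℕ))
      exact key (j : ℕ) i 0 (by have := j.2; omega)
    rw [this]
    have := hxX i
    rw [hF] at this
    exact this 0
  refine ⟨z, hzX, ?_⟩
  intro i
  have hagree : ∀ j ≤ M, (shiftMap^[i] z) j = x i j := by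
    intro j hj
    rw [shiftMap_iterate i z j]
    show x (j + i) 0 = x i j
    have : j + i = i + j := by ring
    rw [this]
    have := key j i 0 (by omega)
    simpa using this
  have hle := shiftDist_le_of_agree hagree
  have hNM : (N : ℝ) ≤ (M : ℝ) := by exact_mod_cast le_max_left N p
  have hN' : 1 / ((N : ℝ) + 1) < ε := hN
  have : ((M : ℝ) + 2)⁻¹ < ε := by
    have h1 : ((M : ℝ) + 2)⁻¹ ≤ ((N : ℝ) + 1)⁻¹ := by
      apply inv_anti₀ (by positivity)
      linarith
    rw [one_div] at hN'
    linarith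
  linarith
end

section
/- Let A be a countable alphabet and X ⊆ A^ℕ a shift space. If the shift map σ on X has the finite shadowing property, then X is a shift of finite order. -/
lemma shiftMap_iterate_apply {A : Type*} (z : ℕ → A) (i n : ℕ) :
    shiftMap^[i] z n = z (n + i) := by
  induction i generalizing z n with
  | zero => rfl
  | succ i ih =>
    rw [Function.iterate_succ_apply, ih]
    simp [shiftMap, Nat.add_assoc, Nat.add_comm 1 i]

lemma shiftDist_lt_one {A : Type*} {a b : ℕ → A} (h : shiftDist a b < 1) : a 0 = b 0 := by
  classical
  by_contra hne
  have hab : a ≠ b := fun he => hne (by rw [he])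
  have h0 : Nat.find (Function.ne_iff.mp hab) = 0 :=
    Nat.le_zero.mp (Nat.find_le hne)
  rw [shiftDist, dif_neg hab, h0] at h
  norm_num at h

lemma shiftDist_le {A : Type*} {a b : ℕ → A} {n : ℕ} (h : ∀ j < n, a j = b j) :
    shiftDist a b ≤ ((n : ℝ) + 1)⁻¹ := by
  classical
  rw [shiftDist]
  split_ifs with hab
  · positivity
  · have hfind : n ≤ Nat.find (Function.ne_iff.mp hab) := by
      refine Nat.le_find_iff _ _ |>.mpr fun m hm => ?_
      simpa using h m hm
    apply inv_anti₀ (by positivity)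
    have := Nat.cast_le (α := ℝ) |>.mpr hfind
    linarith

/-- If the shift map on a shift space `X ⊆ A^ℕ` over a countable alphabet has the finite
shadowing property, then `X` is a shift of finite order. -/
theorem finite_order_of_finiteShadowing {A : Type*} [Countable A]
    [TopologicalSpace A] [DiscreteTopology A]
    (X : Set (ℕ → A)) (hXclosed : IsClosed X)
    (hXinv : ∀ x ∈ X, shiftMap x ∈ X)
    (hfsh : ∀ ε > (0 : ℝ), ∃ δ > (0 : ℝ), ∀ (k : ℕ) (x : ℕ → (ℕ → A)),
      (∀ i, x i ∈ X) →
      (∀ i < k, shiftDist (shiftMap (x i)) (x (i + 1)) < δ) →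
      ∃ z ∈ X, ∀ i ≤ k, shiftDist (shiftMap^[i] z) (x i) < ε) :
    ∃ p : ℕ, HasOrder X p := by
  classical
  obtain ⟨δ, hδ, hsh⟩ := hfsh 1 one_pos
  obtain ⟨n, hn⟩ := exists_nat_one_div_lt hδ
  have hn' : ((n : ℝ) + 1)⁻¹ < δ := by rw [← one_div]; exact_mod_cast hn
  have hiter : ∀ (y : ℕ → A), y ∈ X → ∀ i, shiftMap^[i] y ∈ X := by
    intro y hy i
    induction i with
    | zero => exact hy
    | succ i ih => rw [Function.iterate_succ_apply']; exact hXinv _ ih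
  refine ⟨n + 1, {w : Fin (n + 1) → A | ¬ ∃ x ∈ X, ∀ j : Fin (n + 1), x (j : ℕ) = w j}, ?_⟩
  ext y
  constructor
  · intro hy i hF
    exact hF ⟨shiftMap^[i] y, hiter y hy i, fun j => by
      rw [shiftMap_iterate_apply, Nat.add_comm]⟩
  · intro hy
    have hx : ∀ i, ∃ x ∈ X, ∀ j : Fin (n + 1), x (j : ℕ) = y (i + (j : ℕ)) := by
      intro i
      exact not_not.mp (hy i)
    choose x hxX hxa using hx
    have hpseudo : ∀ k : ℕ, ∀ i < k, shiftDist (shiftMap (x i)) (x (i + 1)) < δ := by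
      intro k i _
      refine lt_of_le_of_lt (shiftDist_le (n := n) ?_) hn'
      intro j hj
      have h1 : shiftMap (x i) j = y (i + (j + 1)) := by
        have := hxa i ⟨j + 1, by omega⟩
        simpa [shiftMap] using this
      have h2 : x (i + 1) j = y ((i + 1) + j) := by
        have := hxa (i + 1) ⟨j, by omega⟩
        simpa using this
      rw [h1, h2]
      ring_nf
    have hz : ∀ k : ℕ, ∃ z ∈ X, ∀ i ≤ k, z i = y i := by
      intro k
      obtain ⟨z, hzX, hzd⟩ := hsh k x hxX (hpseudo k)
      refine ⟨z, hzX, fun i hi => ?_⟩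
      have := shiftDist_lt_one (hzd i hi)
      rw [shiftMap_iterate_apply] at this
      have h0 : x i 0 = y (i + 0) := by
        have := hxa i ⟨0, by omega⟩
        simpa using this
      simpa [h0] using this
    choose z hzX hza using hz
    have htend : Filter.Tendsto z Filter.atTop (nhds y) := by
      rw [tendsto_pi_nhds]
      intro m
      refine Filter.Tendsto.congr' ?_ tendsto_const_nhds
      filter_upwards [Filter.eventually_ge_atTop m] with k hk
      exact (hza k m hk).symm
    exact hXclosed.mem_of_tendsto htend (Filter.Eventually.of_forall hzX)
end

section
/- Let {(Xₘ, dₘ, fₘ)} be dynamical systems with each dₘ bounded by 1, and gₘ : Xₘ₊₁ → Xₘ uniformly continuous bonding maps satisfying fₘ ∘ gₘ = gₘ ∘ fₘ₊₁. If the inverse system (gₘ, Xₘ) satisfies the Mittag-Leffler Condition and each (Xₘ, dₘ, fₘ) has the shadowing property, then the inverse limit dynamical system (lim← Xₘ, d_Π, (fₘ)*) has the shadowing property. -/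
/-- The product metric `d_Π(x,y) = sup_m d_m(x_m, y_m)/(m+1)` on `∏ X_m`. -/
noncomputable def prodDist {X : ℕ → Type*} [∀ m, PseudoMetricSpace (X m)]
    (x y : ∀ m, X m) : ℝ :=
  ⨆ m : ℕ, dist (x m) (y m) / ((m : ℝ) + 1)

/-- The composite bonding map `g_N ∘ g_{N+1} ∘ ⋯ ∘ g_{N+k} : X_{N+k+1} → X_N`. -/
def gcomp {X : ℕ → Type*} (g : ∀ m, X (m + 1) → X m) (N : ℕ) :
    ∀ k : ℕ, X (N + k + 1) → X N
  | 0 => g N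
  | k + 1 => fun x => gcomp g N k (g (N + k + 1) x)

namespace ShadowAux

variable {X : ℕ → Type*}

/-- Transport along an equality of indices. -/
def castX {a b : ℕ} (h : a = b) (x : X a) : X b := h ▸ x

theorem castX_castX {a b c : ℕ} (h₁ : a = b) (h₂ : b = c) (x : X a) :
    castX h₂ (castX h₁ x) = castX (h₁.trans h₂) x := by subst h₁; subst h₂; rfl

theorem castX_map (F : ∀ m, X m → X m) {a b : ℕ} (h : a = b) (x : X a) :
    castX h (F a x) = F b (castX h x) := by subst h; rfl

theorem castX_g (g : ∀ m, X (m + 1) → X m) {a b : ℕ} (h : a = b) (h' : a + 1 = b + 1)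
    (x : X (a + 1)) : castX h (g a x) = g b (castX h' x) := by subst h; rfl

theorem castX_thread (t : ∀ m, X m) {a b : ℕ} (h : a = b) :
    castX h (t a) = t b := by subst h; rfl

/-- Pushdown map: composition of `k` bonding maps from `X (m+k)` to `X m`. -/
def down (g : ∀ m, X (m + 1) → X m) : ∀ (k m : ℕ), X (m + k) → X m
  | 0, _ => id
  | k + 1, m => fun x => down g k m (g (m + k) x)

theorem castX_down (g : ∀ m, X (m + 1) → X m) {A B : ℕ} (a : ℕ) (h : A = B)
    (h' : A + a = B + a) (x : X (A + a)) :
    castX h (down g a A x) = down g a B (castX h' x) := by subst h; rfl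

theorem down_g (g : ∀ m, X (m + 1) → X m) :
    ∀ (a m : ℕ) (e : m + (a + 1) = (m + 1) + a) (x : X (m + (a + 1))),
      down g (a + 1) m x = g m (down g a (m + 1) (castX e x))
  | 0, m, e, x => rfl
  | a + 1, m, e, x => by
      show down g (a + 1) m (g (m + (a + 1)) x) = _
      rw [down_g g a m (by omega) (g (m + (a + 1)) x)]
      show g m (down g a (m + 1) (castX _ (g (m + (a+1)) x)))
        = g m (down g a (m+1) (g ((m+1)+a) (castX e x)))
      rw [castX_g g (show m + (a+1) = (m+1)+a by omega) (by omega) x]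

theorem down_index_congr (g : ∀ m, X (m + 1) → X m) {A m t t' : ℕ} (h : t = t')
    (e : A = m + t) (e' : A = m + t') (x : X A) :
    down g t m (castX e x) = down g t' m (castX e' x) := by subst h; rfl

theorem down_down (g : ∀ m, X (m + 1) → X m) :
    ∀ (b a m c : ℕ) (hc : a + b = c) (e : (m + b) + a = m + c) (x : X ((m + b) + a)),
      down g b m (down g a (m + b) x) = down g c m (castX e x)
  | 0, a, m, c, hc, e, x => by
      have : a = c := by omega
      subst this; rfl
  | b + 1, a, m, c, hc, e, x => by
      show down g b m (g (m + b) (down g a (m + (b+1)) x)) = _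
      rw [show g (m + b) (down g a (m + (b+1)) x)
            = down g (a+1) (m+b) (castX (show m + (b+1) + a = (m+b) + (a+1) by omega) x) from ?_]
      · rw [down_down g b (a+1) m c (by omega) (by omega) _]
        rw [castX_castX]
      · rw [down_g g a (m+b) (by omega) _]
        rw [castX_castX]
        rfl

theorem down_cast_down (g : ∀ m, X (m + 1) → X m) (m b A a c : ℕ) (h : A = m + b)
    (hc : a + b = c) (e : A + a = m + c) (x : X (A + a)) :
    down g b m (castX h (down g a A x)) = down g c m (castX e x) := by
  rw [castX_down g a h (by omega) x, down_down g b a m c hc (by omega), castX_castX]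

theorem down_thread (g : ∀ m, X (m + 1) → X m) (t : ∀ m, X m)
    (ht : ∀ m, g m (t (m + 1)) = t m) :
    ∀ (a m : ℕ), down g a m (t (m + a)) = t m
  | 0, m => rfl
  | a + 1, m => by
      show down g a m (g (m + a) (t (m + a + 1))) = t m
      rw [ht (m + a)]
      exact down_thread g t ht a m

theorem down_cast_thread (g : ∀ m, X (m + 1) → X m) (t : ∀ m, X m)
    (ht : ∀ m, g m (t (m + 1)) = t m) (a m A : ℕ) (h : A = m + a) :
    down g a m (castX h (t A)) = t m := by
  rw [castX_thread t h, down_thread g t ht a m]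

theorem f_down (g : ∀ m, X (m + 1) → X m) (f : ∀ m, X m → X m)
    (hcomm : ∀ (m : ℕ) (x : X (m + 1)), f m (g m x) = g m (f (m + 1) x)) :
    ∀ (a m : ℕ) (x : X (m + a)), f m (down g a m x) = down g a m (f (m + a) x)
  | 0, m, x => rfl
  | a + 1, m, x => by
      show f m (down g a m (g (m + a) x)) = down g a m (g (m + a) (f (m + a + 1) x))
      rw [← hcomm (m + a) x, f_down g f hcomm a m]

theorem iter_down_cast (g : ∀ m, X (m + 1) → X m) (f : ∀ m, X m → X m)
    (hcomm : ∀ (m : ℕ) (x : X (m + 1)), f m (g m x) = g m (f (m + 1) x)) :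
    ∀ (i t m A : ℕ) (e : A = m + t) (x : X A),
      (f m)^[i] (down g t m (castX e x)) = down g t m (castX e ((f A)^[i] x))
  | 0, t, m, A, e, x => rfl
  | i + 1, t, m, A, e, x => by
      rw [Function.iterate_succ_apply, Function.iterate_succ_apply]
      rw [show f m (down g t m (castX e x)) = down g t m (castX e (f A x)) from ?_]
      · exact iter_down_cast g f hcomm i t m A e (f A x)
      · rw [castX_map f e x, f_down g f hcomm t m]

section UC
variable [∀ m, MetricSpace (X m)]

theorem uc_castX {a b : ℕ} (h : a = b) : UniformContinuous (castX (X := X) h) := by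
  subst h; exact uniformContinuous_id

theorem uc_down (g : ∀ m, X (m + 1) → X m) (hg : ∀ m, UniformContinuous (g m)) :
    ∀ (a m : ℕ), UniformContinuous (down g a m)
  | 0, _ => uniformContinuous_id
  | a + 1, m => (uc_down g hg a m).comp (hg (m + a))

end UC

theorem gcomp_eq_down (g : ∀ m, X (m + 1) → X m) :
    ∀ (N t : ℕ) (x : X (N + t + 1)), gcomp g N t x = down g (t + 1) N x
  | _, 0, _ => rfl
  | N, t + 1, x => gcomp_eq_down g N t (g (N + t + 1) x)

/-- Coordinates of the iterate of the product map. -/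
theorem iter_coord (f : ∀ m, X m → X m) :
    ∀ (i : ℕ) (z : ∀ m, X m) (m : ℕ),
      (fun (w : ∀ m, X m) m => f m (w m))^[i] z m = (f m)^[i] (z m)
  | 0, _, _ => rfl
  | i + 1, z, m => by
      rw [Function.iterate_succ_apply, Function.iterate_succ_apply]
      exact iter_coord f i _ m

/-- Recursively chosen lifts inside the stable sets. -/
noncomputable def buildUp (g : ∀ m, X (m + 1) → X m) (S : ∀ m, Set (X m))
    (hsur : ∀ N a, a ∈ S N → ∃ b, b ∈ S (N + 1) ∧ g N b = a)
    (M : ℕ) (a : X M) (ha : a ∈ S M) : ∀ j : ℕ, {b : X (M + j) // b ∈ S (M + j)}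
  | 0 => ⟨a, ha⟩
  | j + 1 =>
      ⟨(hsur (M + j) (buildUp g S hsur M a ha j).1 (buildUp g S hsur M a ha j).2).choose,
       (hsur (M + j) (buildUp g S hsur M a ha j).1 (buildUp g S hsur M a ha j).2).choose_spec.1⟩

theorem buildUp_spec (g : ∀ m, X (m + 1) → X m) (S : ∀ m, Set (X m))
    (hsur : ∀ N a, a ∈ S N → ∃ b, b ∈ S (N + 1) ∧ g N b = a)
    (M : ℕ) (a : X M) (ha : a ∈ S M) (j : ℕ) :
    g (M + j) (buildUp g S hsur M a ha (j + 1)).1 = (buildUp g S hsur M a ha j).1 :=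
  (hsur (M + j) (buildUp g S hsur M a ha j).1 (buildUp g S hsur M a ha j).2).choose_spec.2

/-- A point of the "stable set" at level `M` extends to a full thread of the inverse system. -/
theorem exists_thread (g : ∀ m, X (m + 1) → X m) (S : ∀ m, Set (X m))
    (hsur : ∀ N a, a ∈ S N → ∃ b, b ∈ S (N + 1) ∧ g N b = a)
    (M : ℕ) (a : X M) (ha : a ∈ S M) :
    ∃ z : ∀ m, X m, (∀ m, g m (z (m + 1)) = z m) ∧
      ∀ m (h : m ≤ M), z m = down g (M - m) m (castX (Nat.add_sub_cancel' h).symm a) := by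
  classical
  have key : ∀ (j j' b : ℕ), j = j' → ∀ (e : M + j = b) (e' : M + j' = b),
      castX (X := X) e (buildUp g S hsur M a ha j).1
        = castX e' (buildUp g S hsur M a ha j').1 := by
    intro j j' b h e e'; subst h; rfl
  have keyd : ∀ (k k' m : ℕ), k = k' → ∀ (e : M = m + k) (e' : M = m + k'),
      down g k m (castX e a) = down g k' m (castX e' a) := by
    intro k k' m h e e'; subst h; rfl
  refine ⟨fun m => if h : M ≤ m then castX (Nat.add_sub_cancel' h) (buildUp g S hsur M a ha (m - M)).1
      else down g (M - m) m (castX (Nat.add_sub_cancel' (le_of_not_ge h)).symm a), ?_, ?_⟩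
  · intro m
    by_cases h : M ≤ m
    · have h1 : M ≤ m + 1 := by omega
      simp only [dif_pos h, dif_pos h1]
      rw [key (m + 1 - M) ((m - M) + 1) (m + 1) (by omega) (Nat.add_sub_cancel' h1) (by omega)]
      rw [← buildUp_spec g S hsur M a ha (m - M)]
      rw [castX_g g (Nat.add_sub_cancel' h) (by omega) _]
    · by_cases h1 : M ≤ m + 1
      · simp only [dif_pos h1, dif_neg h]
        rw [key (m + 1 - M) 0 (m + 1) (by omega) (Nat.add_sub_cancel' h1) (by omega)]
        rw [keyd (M - m) 1 m (by omega) (Nat.add_sub_cancel' (le_of_not_ge h)).symm (by omega)]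
        rfl
      · simp only [dif_neg h, dif_neg h1]
        rw [keyd (M - m) ((M - (m + 1)) + 1) m (by omega)
          (Nat.add_sub_cancel' (le_of_not_ge h)).symm (by omega)]
        rw [down_g g (M - (m + 1)) m (by omega) _]
        rw [castX_castX]
  · intro m h
    by_cases h' : M ≤ m
    · have : m = M := le_antisymm h h'
      subst this
      simp only [dif_pos h']
      rw [key (m - m) 0 m (by omega) (Nat.add_sub_cancel' h') (by omega)]
      rw [keyd (m - m) 0 m (by omega) (Nat.add_sub_cancel' h).symm (by omega)]
      rfl
    · simp only [dif_neg h']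

theorem prodDist_coord_le {X : ℕ → Type*} [∀ m, MetricSpace (X m)]
    (hbound : ∀ (m : ℕ) (x y : X m), dist x y ≤ 1) (x y : ∀ m, X m) (m : ℕ) :
    dist (x m) (y m) / ((m : ℝ) + 1) ≤ prodDist x y := by
  unfold prodDist
  apply le_ciSup (f := fun j : ℕ => dist (x j) (y j) / ((j : ℝ) + 1))
  refine ⟨1, ?_⟩
  rintro _ ⟨j, rfl⟩
  have h0 : (0 : ℝ) ≤ (j : ℝ) := Nat.cast_nonneg j
  apply div_le_one_of_le₀
  · exact le_trans (hbound j _ _) (by linarith)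
  · linarith

end ShadowAux

open ShadowAux in
/-- If `{(Xₘ, dₘ, fₘ)}` are dynamical systems with metrics bounded by 1, the bonding maps `gₘ`
are uniformly continuous and intertwine the `fₘ`, the inverse system satisfies the
Mittag-Leffler Condition, and each `fₘ` has the shadowing property, then the inverse limit
dynamical system has the shadowing property. -/
theorem shadowing_inverse_limit {X : ℕ → Type*} [∀ m, MetricSpace (X m)]
    (hbound : ∀ (m : ℕ) (x y : X m), dist x y ≤ 1)
    (f : ∀ m, X m → X m) (hf : ∀ m, Continuous (f m))
    (g : ∀ m, X (m + 1) → X m) (hg : ∀ m, UniformContinuous (g m))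
    (hcomm : ∀ (m : ℕ) (x : X (m + 1)), f m (g m x) = g m (f (m + 1) x))
    (hML : ∀ N : ℕ, ∃ k : ℕ, ∀ i : ℕ,
      Set.range (gcomp g N (k + i)) = Set.range (gcomp g N k))
    (hsh : ∀ m, Shadowing (f m)) :
    ∀ ε > (0 : ℝ), ∃ δ > (0 : ℝ), ∀ x : ℕ → ∀ m, X m,
      (∀ i m, g m (x i (m + 1)) = x i m) →
      (∀ i, prodDist (fun m => f m (x i m)) (x (i + 1)) < δ) →
      ∃ z : ∀ m, X m, (∀ m, g m (z (m + 1)) = z m) ∧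
        ∀ i, prodDist ((fun (w : ∀ m, X m) m => f m (w m))^[i] z) (x i) < ε := by
  classical
  intro ε hε
  obtain ⟨M, hM⟩ : ∃ M : ℕ, 1 / ((M : ℝ) + 2) ≤ ε / 2 := by
    obtain ⟨M, hM⟩ := exists_nat_gt (2 / ε)
    refine ⟨M, ?_⟩
    rw [div_le_iff₀ (by positivity)]
    have h2 := (div_lt_iff₀ hε).mp hM
    nlinarith
  choose k hk using hML
  have hrange : ∀ N t, Set.range (gcomp g N t) = Set.range (down g (t + 1) N) := fun N t =>
    congrArg Set.range (funext (gcomp_eq_down g N t))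
  set S : ∀ N, Set (X N) := fun N => Set.range (down g (k N + 1) N) with hSdef
  have hkd : ∀ N i, Set.range (down g (k N + 1 + i) N) = S N := by
    intro N i
    rw [show k N + 1 + i = (k N + i) + 1 from by omega]
    rw [← hrange N (k N + i), hk N i, hrange N (k N)]
  have hsur : ∀ N a, a ∈ S N → ∃ b, b ∈ S (N + 1) ∧ g N b = a := by
    intro N a haS
    have h1 : a ∈ Set.range (down g (k N + k (N + 1) + 2) N) := by
      rw [show k N + k (N + 1) + 2 = k N + 1 + (k (N + 1) + 1) from by omega,
        hkd N (k (N + 1) + 1)]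
      exact haS
    obtain ⟨c, hc⟩ := h1
    refine ⟨down g (k (N + 1) + 1 + k N) (N + 1)
      (castX (show N + (k N + k (N + 1) + 2) = (N + 1) + (k (N + 1) + 1 + k N) from by omega) c),
      ?_, ?_⟩
    · rw [← hkd (N + 1) (k N)]
      exact ⟨_, rfl⟩
    · rw [← hc]
      have h2 : down g (k N + k (N + 1) + 2) N c
          = down g ((k (N + 1) + 1 + k N) + 1) N (castX (by omega) c) :=
        down_index_congr g (by omega) rfl (by omega) c
      rw [h2, down_g g (k (N + 1) + 1 + k N) N (by omega), castX_castX]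
  set n' : ℕ := M + k M + 1 with hn'
  have percase : ∀ m : ℕ, ∃ d > (0 : ℝ), ∀ (t : ℕ) (e : n' = m + t) (a b : X n'),
      dist a b < d → dist (down g t m (castX e a)) (down g t m (castX e b)) < ε / 2 := by
    intro m
    by_cases hm : m ≤ n'
    · have e₀ : n' = m + (n' - m) := (Nat.add_sub_cancel' hm).symm
      have huc : UniformContinuous (fun x : X n' => down g (n' - m) m (castX e₀ x)) :=
        (uc_down g hg _ _).comp (uc_castX e₀)
      obtain ⟨d, hd, hd2⟩ := Metric.uniformContinuous_iff.mp huc (ε / 2) (by linarith)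
      refine ⟨d, hd, ?_⟩
      intro t e a b hab
      obtain rfl : t = n' - m := by omega
      exact hd2 hab
    · exact ⟨1, by norm_num, fun t e => absurd e (by omega)⟩
  have minlem : ∀ Mb : ℕ, ∃ d > (0 : ℝ), ∀ m ≤ Mb, ∀ (t : ℕ) (e : n' = m + t) (a b : X n'),
      dist a b < d → dist (down g t m (castX e a)) (down g t m (castX e b)) < ε / 2 := by
    intro Mb
    induction Mb with
    | zero =>
        obtain ⟨d, hd, h2⟩ := percase 0
        refine ⟨d, hd, ?_⟩
        intro m hm
        obtain rfl : m = 0 := Nat.le_zero.mp hm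
        exact h2
    | succ Mb ih =>
        obtain ⟨d1, hd1, h1⟩ := ih
        obtain ⟨d2, hd2, h2⟩ := percase (Mb + 1)
        refine ⟨min d1 d2, lt_min hd1 hd2, ?_⟩
        intro m hm t e a b hab
        rcases Nat.lt_or_ge m (Mb + 1) with h | h
        · exact h1 m (by omega) t e a b (lt_of_lt_of_le hab (min_le_left _ _))
        · obtain rfl : m = Mb + 1 := by omega
          exact h2 t e a b (lt_of_lt_of_le hab (min_le_right _ _))
  obtain ⟨ε'', hε'', hmin⟩ := minlem M
  obtain ⟨δ', hδ', hshad⟩ := hsh n' ε'' hε''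
  refine ⟨δ' / ((n' : ℝ) + 1), by positivity, ?_⟩
  intro x hx1 hx2
  have hpo : ∀ i, dist (f n' (x i n')) (x (i + 1) n') < δ' := by
    intro i
    have hle := prodDist_coord_le hbound (fun m => f m (x i m)) (x (i + 1)) n'
    have hlt := lt_of_le_of_lt hle (hx2 i)
    have hp : (0 : ℝ) < (n' : ℝ) + 1 := by positivity
    rw [div_lt_div_iff₀ hp hp] at hlt
    exact lt_of_mul_lt_mul_right hlt (le_of_lt hp)
  obtain ⟨w, hw⟩ := hshad (fun i => x i n') hpo
  have haS : down g (k M + 1) M w ∈ S M := ⟨w, rfl⟩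
  obtain ⟨z, hzt, hzv⟩ := exists_thread g S hsur M _ haS
  refine ⟨z, hzt, ?_⟩
  have hzw : ∀ m, m ≤ M → ∃ t, ∃ e : n' = m + t, z m = down g t m (castX e w) := by
    intro m hm
    refine ⟨k M + 1 + (M - m), by omega, ?_⟩
    rw [hzv m hm]
    exact down_cast_down g m (M - m) M (k M + 1) _ (Nat.add_sub_cancel' hm).symm rfl (by omega) w
  intro i
  have hhalf : ε / 2 < ε := by linarith
  show prodDist _ _ < ε
  unfold prodDist
  refine lt_of_le_of_lt (ciSup_le ?_) hhalf
  intro m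
  by_cases hm : m ≤ M
  · obtain ⟨t, e, hz⟩ := hzw m hm
    have h1 : ((fun (w : ∀ m, X m) m => f m (w m))^[i] z) m = (f m)^[i] (z m) :=
      iter_coord f i z m
    rw [h1, hz, iter_down_cast g f hcomm i t m n' e w]
    have hxm : x i m = down g t m (castX e (x i n')) :=
      (down_cast_thread g (x i) (hx1 i) t m n' e).symm
    rw [hxm]
    have hd := hmin m hm t e ((f n')^[i] w) (x i n') (hw i)
    have h2 : (1 : ℝ) ≤ (m : ℝ) + 1 := by
      have := Nat.cast_nonneg (α := ℝ) m; linarith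
    have h3 := div_le_self (dist_nonneg (x := down g t m (castX e ((f n')^[i] w)))
      (y := down g t m (castX e (x i n')))) h2
    linarith
  · have hb : dist (((fun (w : ∀ m, X m) m => f m (w m))^[i] z) m) (x i m) ≤ 1 := hbound m _ _
    have hm2 : (M : ℝ) + 2 ≤ (m : ℝ) + 1 := by
      have : M + 2 ≤ m + 1 := by omega
      exact_mod_cast this
    calc dist (((fun (w : ∀ m, X m) m => f m (w m))^[i] z) m) (x i m) / ((m : ℝ) + 1)
        ≤ 1 / ((M : ℝ) + 2) := div_le_div₀ zero_le_one hb (by positivity) hm2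
      _ ≤ ε / 2 := hM
end

section
/- Let (X,d,f) be a dynamical system, 𝒜 = {𝒰ₙ} a tame defining sequence of (X,d), with 𝒰ₙ being ρₙ-separated and Sₙ → 0 where Sₙ is the supremum of diameters of elements of 𝒰ₙ. Then f has the finite shadowing property if and only if for every m ∈ ℕ there exists n > m such that every sequence (Oᵢ) of elements of 𝒰ₙ with f(Oᵢ) ∩ Oᵢ₊₁ ≠ ∅ for all i refines a sequence (Vᵢ) of elements of 𝒰ₘ (Oᵢ ⊆ Vᵢ) such that for every k there exists x ∈ X with fⁱ(x) ∈ Vᵢ for 0 ≤ i ≤ k. -/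
/-- The finite shadowing property: every finite δ-pseudo-orbit is ε-shadowed. -/
def FiniteShadowing {X : Type*} [PseudoMetricSpace X] (f : X → X) : Prop :=
  ∀ ε > (0 : ℝ), ∃ δ > (0 : ℝ), ∀ (k : ℕ) (x : ℕ → X),
    (∀ n < k, dist (f (x n)) (x (n + 1)) < δ) →
      ∃ z, ∀ n ≤ k, dist (f^[n] z) (x n) < ε

lemma refine_trans_aux {X : Type*} (𝒰 : ℕ → Set (Set X))
    (hrefine : ∀ n, ∀ U ∈ 𝒰 (n + 1), ∃ V ∈ 𝒰 n, U ⊆ V) :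
    ∀ m n, m ≤ n → ∀ U ∈ 𝒰 n, ∃ V ∈ 𝒰 m, U ⊆ V := by
  intro m n hmn
  induction n, hmn using Nat.le_induction with
  | base => intro U hU; exact ⟨U, hU, subset_rfl⟩
  | succ n hmn ih =>
    intro U hU
    obtain ⟨W, hW, hUW⟩ := hrefine n U hU
    obtain ⟨V, hV, hWV⟩ := ih W hW
    exact ⟨V, hV, hUW.trans hWV⟩

/-- Let `(X,d,f)` be a dynamical system and `{𝒰ₙ}` a tame defining sequence (partitions of
nonempty clopen sets, refining, forming a basis, `ρₙ`-separated, with mesh `Sₙ → 0`). Then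
`f` has the finite shadowing property iff for every `m` there is `n > m` such that every
element of `𝒫𝒪(𝒰ₙ)` maps into `𝒪(𝒰ₘ)` under the refinement map. -/
theorem finiteShadowing_iff_PO_into_O {X : Type*} [MetricSpace X]
    (f : X → X) (hf : Continuous f)
    (𝒰 : ℕ → Set (Set X))
    (hne : ∀ n, ∀ U ∈ 𝒰 n, U.Nonempty)
    (hclopen : ∀ n, ∀ U ∈ 𝒰 n, IsClopen U)
    (hdisj : ∀ n, ∀ U ∈ 𝒰 n, ∀ V ∈ 𝒰 n, U ≠ V → Disjoint U V)
    (hcover : ∀ n, ⋃₀ 𝒰 n = Set.univ)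
    (hrefine : ∀ n, ∀ U ∈ 𝒰 (n + 1), ∃ V ∈ 𝒰 n, U ⊆ V)
    (hbasis : ∀ (x : X) (W : Set X), IsOpen W → x ∈ W → ∃ n, ∃ U ∈ 𝒰 n, x ∈ U ∧ U ⊆ W)
    (S : ℕ → ℝ) (hS : ∀ n, ∀ U ∈ 𝒰 n, ∀ x ∈ U, ∀ y ∈ U, dist x y ≤ S n)
    (hS0 : Filter.Tendsto S Filter.atTop (nhds 0))
    (ρ : ℕ → ℝ) (hρ : ∀ n, 0 < ρ n)
    (hsep : ∀ n, ∀ U ∈ 𝒰 n, ∀ V ∈ 𝒰 n, U ≠ V → ∀ x ∈ U, ∀ y ∈ V, ρ n ≤ dist x y) :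
    FiniteShadowing f ↔
      ∀ m : ℕ, ∃ n > m, ∀ O : ℕ → Set X,
        (∀ i, O i ∈ 𝒰 n) → (∀ i, (f '' O i ∩ O (i + 1)).Nonempty) →
        ∃ V : ℕ → Set X, (∀ i, V i ∈ 𝒰 m) ∧ (∀ i, O i ⊆ V i) ∧
          ∀ k : ℕ, ∃ x : X, ∀ i ≤ k, f^[i] x ∈ V i := by
  have hmem : ∀ (n : ℕ) (x : X), ∃ U ∈ 𝒰 n, x ∈ U := by
    intro n x
    have : x ∈ ⋃₀ 𝒰 n := by rw [hcover n]; trivial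
    simpa using this
  constructor
  · -- finite shadowing → combinatorial condition
    intro hFS m
    obtain ⟨δ, hδ, hshadow⟩ := hFS (ρ m) (hρ m)
    have hev : ∀ᶠ j in Filter.atTop, S j < δ :=
      hS0.eventually (gt_mem_nhds hδ)
    obtain ⟨n, hSn, hn⟩ := (hev.and (Filter.eventually_gt_atTop m)).exists
    refine ⟨n, hn, fun O hO hPO => ?_⟩
    have key : ∀ i, ∃ a, a ∈ O i ∧ f a ∈ O (i + 1) := by
      intro i
      obtain ⟨y, hy1, hy2⟩ := hPO i
      obtain ⟨x, hx, rfl⟩ := hy1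
      exact ⟨x, hx, hy2⟩
    choose a ha hfa using key
    choose V hV hOV using fun i =>
      refine_trans_aux 𝒰 hrefine m n hn.le (O i) (hO i)
    refine ⟨V, hV, hOV, fun k => ?_⟩
    have hpo : ∀ i < k, dist (f (a i)) (a (i + 1)) < δ := fun i _ =>
      lt_of_le_of_lt (hS n (O (i + 1)) (hO (i + 1)) _ (hfa i) _ (ha (i + 1))) hSn
    obtain ⟨z, hz⟩ := hshadow k a hpo
    refine ⟨z, fun i hik => ?_⟩
    obtain ⟨W, hW, hzW⟩ := hmem m (f^[i] z)
    by_cases hWV : W = V i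
    · exact hWV ▸ hzW
    · exact absurd (hz i hik)
        (not_lt.2 (hsep m W hW (V i) (hV i) hWV _ hzW _ (hOV i (ha i))))
  · -- combinatorial condition → finite shadowing
    intro H ε hε
    have hev : ∀ᶠ j in Filter.atTop, S j < ε :=
      hS0.eventually (gt_mem_nhds hε)
    obtain ⟨m, hSm⟩ := hev.exists
    obtain ⟨n, hnm, hn⟩ := H m
    refine ⟨ρ n, hρ n, fun k x hx => ?_⟩
    set y : ℕ → X := fun i => if i ≤ k then x i else f^[i - k] (x k) with hy
    have hyk : ∀ i ≤ k, y i = x i := fun i hi => if_pos hi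
    have hyge : ∀ i, k ≤ i → y i = f^[i - k] (x k) := by
      intro i hi
      rcases eq_or_lt_of_le hi with rfl | h
      · simp [hy]
      · simp [hy, Nat.not_le.2 h]
    have hpo : ∀ i, dist (f (y i)) (y (i + 1)) < ρ n := by
      intro i
      rcases lt_or_ge i k with h | h
      · rw [hyk i h.le, hyk (i + 1) h]
        exact hx i h
      · have h1 : f (y i) = y (i + 1) := by
          rw [hyge i h, hyge (i + 1) (h.trans (Nat.le_succ i)),
            Nat.succ_sub h, Function.iterate_succ_apply']
        rw [h1, dist_self]
        exact hρ n
    choose O hO hyO using fun i => hmem n (y i)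
    have hPO : ∀ i, (f '' O i ∩ O (i + 1)).Nonempty := by
      intro i
      refine ⟨f (y i), ⟨y i, hyO i, rfl⟩, ?_⟩
      obtain ⟨W, hW, hfW⟩ := hmem n (f (y i))
      by_cases hWO : W = O (i + 1)
      · exact hWO ▸ hfW
      · exact absurd (hpo i)
          (not_lt.2 (hsep n W hW _ (hO (i + 1)) hWO _ hfW _ (hyO (i + 1))))
    obtain ⟨V, hV, hOV, hVk⟩ := hn O hO hPO
    obtain ⟨z, hz⟩ := hVk k
    refine ⟨z, fun i hik => ?_⟩
    have h2 : x i ∈ V i := by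
      have := hOV i (hyO i)
      rwa [hyk i hik] at this
    exact lt_of_le_of_lt (hS m (V i) (hV i) _ (hz i hik) _ h2) hSm
end

section
/- Let (X,d,f) be a dynamical system with a tame defining sequence 𝒜 = {𝒰ₙ}. If f has the shadowing property, then f has the finite shadowing property and the inverse system (↪, 𝒫𝒪(𝒰ₙ)) satisfies the Mittag-Leffler Condition. -/
/-- `𝒫𝒪(P, f)`: sequences of elements of the partition `P` traced by pseudo-orbits. -/
def PO {X : Type*} (f : X → X) (P : Set (Set X)) : Set (ℕ → Set X) :=
  {O | (∀ i, O i ∈ P) ∧ ∀ i, (f '' O i ∩ O (i + 1)).Nonempty}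

/-- The image of `𝒫𝒪(Pi, f)` in `Pn^ℕ` under the refinement bonding maps. -/
def POImage {X : Type*} (f : X → X) (Pn Pi : Set (Set X)) : Set (ℕ → Set X) :=
  {V | (∀ j, V j ∈ Pn) ∧ ∃ O ∈ PO f Pi, ∀ j, O j ⊆ V j}

/-!
Shadowing gives finite shadowing by continuing a finite pseudo-orbit with the true orbit of its
endpoint. For Mittag-Leffler, take `δ` shadowing `ρ N`-pseudo-orbits and `k > N` with mesh of
`𝒰 (k + 1)` below `δ`. Pushing a chain of `𝒰 (i + 1)` forward to `𝒰 (k + 1)` shows that the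
images in `𝒰 N` can only shrink as `i` grows. Conversely, a chain of `𝒰 (k + 1)` is traced by a
`δ`-pseudo-orbit; its shadowing orbit has an itinerary in `𝒰 (i + 1)`, and since it stays within
`ρ N` of the pseudo-orbit, the `ρ N`-separation of `𝒰 N` forces this itinerary to lie over the
same chain of `𝒰 N`.
-/

open Set Function Filter

theorem Shadowing.finiteShadowing {X : Type*} [PseudoMetricSpace X] {f : X → X}
    (hsh : Shadowing f) : FiniteShadowing f := by
  intro ε hε
  obtain ⟨δ, hδ, hshadow⟩ := hsh ε hε
  refine ⟨δ, hδ, fun k x hx => ?_⟩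
  let y : ℕ → X := fun n => if n ≤ k then x n else f^[n - k] (x k)
  have hy_orbit : ∀ n ≥ k, y (n + 1) = f (y n) := by
    intro n hn
    rcases hn.eq_or_lt with rfl | hn
    · simp [y]
    · have hsub : n + 1 - k = n - k + 1 := by omega
      simp [y, hn.not_ge, (Nat.lt_succ_of_lt hn).not_ge, hsub, iterate_succ_apply']
  have hy : ∀ n, dist (f (y n)) (y (n + 1)) < δ := by
    intro n
    rcases lt_or_ge n k with hn | hn
    · simpa [y, hn.le, Nat.succ_le_of_lt hn] using hx n hn
    · simpa [hy_orbit n hn] using hδ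
  obtain ⟨z, hz⟩ := hshadow y hy
  exact ⟨z, fun n hn => by simpa [y, hn] using hz n⟩

section Partitions

variable {X : Type*} {f : X → X} {P Q R : Set (Set X)}

def Refines (P Q : Set (Set X)) : Prop :=
  ∀ U ∈ P, ∃ V ∈ Q, U ⊆ V

theorem Refines.trans (hPQ : Refines P Q) (hQR : Refines Q R) : Refines P R := by
  intro U hU
  obtain ⟨V, hV, hUV⟩ := hPQ U hU
  obtain ⟨W, hW, hVW⟩ := hQR V hV
  exact ⟨W, hW, hUV.trans hVW⟩

theorem refines_of_le {𝒰 : ℕ → Set (Set X)} (h𝒰 : ∀ n, Refines (𝒰 (n + 1)) (𝒰 n)) {n m : ℕ}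
    (hnm : n ≤ m) : Refines (𝒰 m) (𝒰 n) := by
  induction m, hnm using Nat.le_induction with
  | base => exact fun U hU => ⟨U, hU, subset_rfl⟩
  | succ m _ ih => exact (h𝒰 m).trans ih

theorem Refines.subset_of_inter_nonempty (hQP : Refines Q P) (hdisj : P.Pairwise Disjoint)
    {U V : Set X} (hU : U ∈ Q) (hV : V ∈ P) (hUV : (U ∩ V).Nonempty) : U ⊆ V := by
  obtain ⟨W, hW, hUW⟩ := hQP U hU
  obtain rfl : W = V := by
    by_contra hWV
    exact not_disjoint_iff_nonempty_inter.mpr (hUV.mono (inter_subset_inter_left V hUW))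
      (hdisj hW hV hWV)
  exact hUW

theorem Refines.subset_of_dist_lt [PseudoMetricSpace X] {ρ : ℝ} (hQP : Refines Q P)
    (hsep : ∀ U ∈ P, ∀ V ∈ P, U ≠ V → ∀ x ∈ U, ∀ y ∈ V, ρ ≤ dist x y)
    {U V : Set X} (hU : U ∈ Q) (hV : V ∈ P) {x y : X} (hx : x ∈ U) (hy : y ∈ V)
    (hxy : dist x y < ρ) : U ⊆ V := by
  obtain ⟨W, hW, hUW⟩ := hQP U hU
  obtain rfl : W = V := by
    by_contra hWV
    exact (hsep W hW V hV hWV x (hUW hx) y hy).not_gt hxy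
  exact hUW

theorem nonempty_of_mem_PO {O : ℕ → Set X} (hO : O ∈ PO f P) (j : ℕ) : (O j).Nonempty :=
  (hO.2 j).left.of_image

theorem exists_mem_PO_of_refines (hPQ : Refines P Q) {O : ℕ → Set X} (hO : O ∈ PO f P) :
    ∃ O' ∈ PO f Q, ∀ j, O j ⊆ O' j := by
  choose O' hO'Q hOO' using fun j => hPQ (O j) (hO.1 j)
  refine ⟨O', ⟨hO'Q, fun j => ?_⟩, hOO'⟩
  exact (hO.2 j).mono (inter_subset_inter (image_mono (hOO' j)) (hOO' (j + 1)))

theorem exists_mem_PO_iterate_mem (hcover : ⋃₀ Q = univ) (z : X) :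
    ∃ O ∈ PO f Q, ∀ j, f^[j] z ∈ O j := by
  choose O hOQ hzO using fun j => mem_sUnion.mp (hcover ▸ mem_univ (f^[j] z))
  refine ⟨O, ⟨hOQ, fun j => ⟨f^[j + 1] z, ?_, hzO (j + 1)⟩⟩, hzO⟩
  exact ⟨f^[j] z, hzO j, (iterate_succ_apply' f j z).symm⟩

theorem exists_pseudoOrbit_of_mem_PO [PseudoMetricSpace X] {δ : ℝ}
    (hmesh : ∀ U ∈ P, ∀ x ∈ U, ∀ y ∈ U, dist x y < δ) {O : ℕ → Set X} (hO : O ∈ PO f P) :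
    ∃ x : ℕ → X, (∀ j, x j ∈ O j) ∧ ∀ j, dist (f (x j)) (x (j + 1)) < δ := by
  have hstep : ∀ j, ∃ a ∈ O j, f a ∈ O (j + 1) := by
    intro j
    obtain ⟨_, ⟨a, ha, rfl⟩, hfa⟩ := hO.2 j
    exact ⟨a, ha, hfa⟩
  choose x hx hfx using hstep
  exact ⟨x, hx, fun j => hmesh _ (hO.1 (j + 1)) _ (hfx j) _ (hx (j + 1))⟩

theorem POImage_subset_of_refines (hdisj : P.Pairwise Disjoint) (hQP : Refines Q P)
    (hRQ : Refines R Q) : POImage f P R ⊆ POImage f P Q := by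
  rintro V ⟨hV, O, hO, hOV⟩
  obtain ⟨O', hO', hOO'⟩ := exists_mem_PO_of_refines hRQ hO
  refine ⟨hV, O', hO', fun j => hQP.subset_of_inter_nonempty hdisj (hO'.1 j) (hV j) ?_⟩
  obtain ⟨p, hp⟩ := nonempty_of_mem_PO hO j
  exact ⟨p, hOO' j hp, hOV j hp⟩

theorem POImage_subset_of_shadowing [PseudoMetricSpace X] {ρ δ : ℝ}
    (hshadow : ∀ x : ℕ → X, (∀ n, dist (f (x n)) (x (n + 1)) < δ) →
      ∃ z, ∀ n, dist (f^[n] z) (x n) < ρ)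
    (hsep : ∀ U ∈ P, ∀ V ∈ P, U ≠ V → ∀ x ∈ U, ∀ y ∈ V, ρ ≤ dist x y)
    (hQP : Refines Q P) (hcover : ⋃₀ Q = univ)
    (hmesh : ∀ U ∈ R, ∀ x ∈ U, ∀ y ∈ U, dist x y < δ) : POImage f P R ⊆ POImage f P Q := by
  rintro V ⟨hV, O, hO, hOV⟩
  obtain ⟨x, hxO, hx⟩ := exists_pseudoOrbit_of_mem_PO hmesh hO
  obtain ⟨z, hz⟩ := hshadow x hx
  obtain ⟨O', hO', hzO'⟩ := exists_mem_PO_iterate_mem (f := f) hcover z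
  exact ⟨hV, O', hO', fun j =>
    hQP.subset_of_dist_lt hsep (hO'.1 j) (hV j) (hzO' j) (hOV j (hxO j)) (hz j)⟩

end Partitions

theorem finiteShadowing_and_ML_of_shadowing_general {X : Type*} [MetricSpace X]
    (f : X → X)
    (𝒰 : ℕ → Set (Set X))
    (hdisj : ∀ n, ∀ U ∈ 𝒰 n, ∀ V ∈ 𝒰 n, U ≠ V → Disjoint U V)
    (hcover : ∀ n, ⋃₀ 𝒰 n = Set.univ)
    (hrefine : ∀ n, ∀ U ∈ 𝒰 (n + 1), ∃ V ∈ 𝒰 n, U ⊆ V)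
    (S : ℕ → ℝ) (hS : ∀ n, ∀ U ∈ 𝒰 n, ∀ x ∈ U, ∀ y ∈ U, dist x y ≤ S n)
    (hS0 : Filter.Tendsto S Filter.atTop (nhds 0))
    (ρ : ℕ → ℝ) (hρ : ∀ n, 0 < ρ n)
    (hsep : ∀ n, ∀ U ∈ 𝒰 n, ∀ V ∈ 𝒰 n, U ≠ V → ∀ x ∈ U, ∀ y ∈ V, ρ n ≤ dist x y)
    (hsh : Shadowing f) :
    FiniteShadowing f ∧
    ∀ N : ℕ, ∃ k > N, ∀ i ≥ k,
      POImage f (𝒰 N) (𝒰 (i + 1)) = POImage f (𝒰 N) (𝒰 (k + 1)) := by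
  refine ⟨hsh.finiteShadowing, fun N => ?_⟩
  obtain ⟨δ, hδ, hshadow⟩ := hsh (ρ N) (hρ N)
  obtain ⟨M, hM⟩ := eventually_atTop.mp (hS0.eventually (gt_mem_nhds hδ))
  have hrefines {n m : ℕ} (hnm : n ≤ m) : Refines (𝒰 m) (𝒰 n) := refines_of_le hrefine hnm
  refine ⟨max (N + 1) M, by omega, fun i hi => subset_antisymm ?_ ?_⟩
  · exact POImage_subset_of_refines (fun U hU V hV hUV => hdisj N U hU V hV hUV)
      (hrefines (by omega)) (hrefines (by omega))
  · exact POImage_subset_of_shadowing hshadow (hsep N) (hrefines (by omega)) (hcover _)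
      fun U hU x hx y hy => (hS _ U hU x hx y hy).trans_lt (hM _ (by omega))

/-- If `(X,d,f)` has the shadowing property and `{𝒰ₙ}` is a tame defining sequence of `(X,d)`,
then `f` has the finite shadowing property and the inverse system `(↪, 𝒫𝒪(𝒰ₙ))` satisfies the
Mittag-Leffler Condition. -/
theorem finiteShadowing_and_ML_of_shadowing {X : Type*} [MetricSpace X]
    (f : X → X) (hf : Continuous f)
    (𝒰 : ℕ → Set (Set X))
    (hne : ∀ n, ∀ U ∈ 𝒰 n, U.Nonempty)
    (hclopen : ∀ n, ∀ U ∈ 𝒰 n, IsClopen U)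
    (hdisj : ∀ n, ∀ U ∈ 𝒰 n, ∀ V ∈ 𝒰 n, U ≠ V → Disjoint U V)
    (hcover : ∀ n, ⋃₀ 𝒰 n = Set.univ)
    (hrefine : ∀ n, ∀ U ∈ 𝒰 (n + 1), ∃ V ∈ 𝒰 n, U ⊆ V)
    (hbasis : ∀ (x : X) (W : Set X), IsOpen W → x ∈ W → ∃ n, ∃ U ∈ 𝒰 n, x ∈ U ∧ U ⊆ W)
    (S : ℕ → ℝ) (hS : ∀ n, ∀ U ∈ 𝒰 n, ∀ x ∈ U, ∀ y ∈ U, dist x y ≤ S n)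
    (hS0 : Filter.Tendsto S Filter.atTop (nhds 0))
    (ρ : ℕ → ℝ) (hρ : ∀ n, 0 < ρ n)
    (hsep : ∀ n, ∀ U ∈ 𝒰 n, ∀ V ∈ 𝒰 n, U ≠ V → ∀ x ∈ U, ∀ y ∈ V, ρ n ≤ dist x y)
    (hsh : Shadowing f) :
    FiniteShadowing f ∧
    ∀ N : ℕ, ∃ k > N, ∀ i ≥ k,
      POImage f (𝒰 N) (𝒰 (i + 1)) = POImage f (𝒰 N) (𝒰 (k + 1)) :=
  finiteShadowing_and_ML_of_shadowing_general f 𝒰 hdisj hcover hrefine S hS hS0 ρ hρ hsep hsh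
end

section
/- Let (X,d) be a complete ultrametric space and f : X → X an eventually 1-Lipschitz map, i.e., there exists ε > 0 such that d(x,y) < ε implies d(f(x),f(y)) ≤ d(x,y). Then f has the shadowing property. -/
/-- In a complete ultrametric space, every eventually 1-Lipschitz map has the shadowing
property. -/
theorem shadowing_of_eventually_one_lipschitz {X : Type*} [MetricSpace X] [CompleteSpace X]
    (hum : ∀ x y z : X, dist x z ≤ max (dist x y) (dist y z))
    (f : X → X)
    (hlip : ∃ ε > (0 : ℝ), ∀ x y : X, dist x y < ε → dist (f x) (f y) ≤ dist x y) :
    Shadowing f := by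
  intro ε hε
  obtain ⟨ε₀, hε₀, hl⟩ := hlip
  refine ⟨min ε ε₀, lt_min hε hε₀, fun x hx => ⟨x 0, fun n => ?_⟩⟩
  have key : ∀ n, dist (f^[n] (x 0)) (x n) < min ε ε₀ := by
    intro n
    induction n with
    | zero => simpa using lt_min hε hε₀
    | succ n ih =>
      have h1 : dist (f (f^[n] (x 0))) (f (x n)) ≤ dist (f^[n] (x 0)) (x n) :=
        hl _ _ (lt_of_lt_of_le ih (min_le_right _ _))
      calc dist (f^[n+1] (x 0)) (x (n+1))
          ≤ max (dist (f^[n+1] (x 0)) (f (x n))) (dist (f (x n)) (x (n+1))) := hum _ _ _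
        _ < min ε ε₀ := max_lt (by
            rw [Function.iterate_succ_apply']
            exact lt_of_le_of_lt h1 ih) (hx n)
  exact lt_of_lt_of_le (key n) (min_le_left _ _)
end

section
/- Let (X,d) be an ultrametric space in which, for some ε > 0, all closed balls of radius ε are compact. Let f : X → X be an invertible uniformly continuous map such that f⁻¹ is eventually 1-Lipschitz (there is ε' > 0 with d(x,y) < ε' implying d(f⁻¹(x), f⁻¹(y)) ≤ d(x,y)). Then f has the shadowing property. -/
/-- Let `(X,d)` be an ultrametric space in which all closed balls of some fixed radius `ε > 0`
are compact. If `f : X → X` is an invertible uniformly continuous map whose inverse is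
eventually 1-Lipschitz, then `f` has the shadowing property. -/
theorem shadowing_of_inverse_eventually_one_lipschitz {X : Type*} [MetricSpace X]
    (hum : ∀ x y z : X, dist x z ≤ max (dist x y) (dist y z))
    (hballs : ∃ ε > (0 : ℝ), ∀ x : X, IsCompact (Metric.closedBall x ε))
    (f g : X → X)
    (hgf : Function.LeftInverse g f) (hfg : Function.RightInverse g f)
    (hf : UniformContinuous f)
    (hglip : ∃ ε' > (0 : ℝ), ∀ x y : X, dist x y < ε' → dist (g x) (g y) ≤ dist x y) :
    Shadowing f := by
  obtain ⟨ε₀, hε₀, hcomp⟩ := hballs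
  obtain ⟨ε', hε', hg⟩ := hglip
  intro ε hε
  set m := min ε (min ε' ε₀) with hm
  have hm0 : 0 < m := lt_min hε (lt_min hε' hε₀)
  set δ := m / 2 with hδdef
  have hδ : 0 < δ := half_pos hm0
  have hδm : δ < m := half_lt_self hm0
  have hδε : δ < ε := hδm.trans_le (min_le_left _ _)
  have hδε' : δ < ε' := hδm.trans_le ((min_le_right _ _).trans (min_le_left _ _))
  have hδε₀ : δ < ε₀ := hδm.trans_le ((min_le_right _ _).trans (min_le_right _ _))
  refine ⟨δ, hδ, ?_⟩
  intro x hx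
  -- g^[k] is 1-Lipschitz at scales below ε'
  have gA : ∀ (k : ℕ) (a b : X), dist a b < ε' → dist (g^[k] a) (g^[k] b) ≤ dist a b := by
    intro k
    induction k with
    | zero => intro a b _; simp
    | succ k ih =>
      intro a b h
      have h1 := ih a b h
      calc dist (g^[k+1] a) (g^[k+1] b) = dist (g (g^[k] a)) (g (g^[k] b)) := by
            simp [Function.iterate_succ_apply']
        _ ≤ dist (g^[k] a) (g^[k] b) := hg _ _ (lt_of_le_of_lt h1 h)
        _ ≤ dist a b := h1
  -- consecutive pulled-back pseudo-orbit points are δ-close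
  have hstep : ∀ n k : ℕ, dist (g^[k+1] (x (n+k+1))) (g^[k] (x (n+k))) < δ := by
    intro n k
    have hxk := hx (n+k)
    have h0 : dist (g (x (n+k+1))) (x (n+k)) < δ := by
      calc dist (g (x (n+k+1))) (x (n+k))
          = dist (g (x (n+k+1))) (g (f (x (n+k)))) := by rw [hgf]
        _ ≤ dist (x (n+k+1)) (f (x (n+k))) := by
            apply hg
            rw [dist_comm]
            exact hxk.trans hδε'
        _ = dist (f (x (n+k))) (x (n+k+1)) := dist_comm _ _
        _ < δ := hxk
    calc dist (g^[k+1] (x (n+k+1))) (g^[k] (x (n+k)))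
        = dist (g^[k] (g (x (n+k+1)))) (g^[k] (x (n+k))) := by
          rw [Function.iterate_succ_apply]
      _ ≤ dist (g (x (n+k+1))) (x (n+k)) := gA k _ _ (h0.trans hδε')
      _ < δ := h0
  -- by the ultrametric inequality, all pulled-back points are δ-close to x n
  have hB : ∀ n k : ℕ, dist (g^[k] (x (n+k))) (x n) < δ := by
    intro n k
    induction k with
    | zero => simpa using hδ
    | succ k ih =>
      exact (hum (g^[k+1] (x (n+k+1))) (g^[k] (x (n+k))) (x n)).trans_lt
        (max_lt (hstep n k) ih)
  -- the sequence lies in a compact ball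
  have hzball : ∀ m : ℕ, g^[m] (x m) ∈ Metric.closedBall (x 0) ε₀ := by
    intro j
    have h := hB 0 j
    rw [Nat.zero_add] at h
    exact Metric.mem_closedBall.mpr (h.trans hδε₀).le
  obtain ⟨a, -, φ, hφ, hlim⟩ := (hcomp (x 0)).tendsto_subseq hzball
  -- f^[n] ∘ g^[n] = id
  have hfgn : ∀ (n : ℕ) (u : X), f^[n] (g^[n] u) = u := by
    intro n
    induction n with
    | zero => intro u; rfl
    | succ n ih =>
      intro u
      calc f^[n+1] (g^[n+1] u) = f^[n] (f (g (g^[n] u))) := by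
            rw [Function.iterate_succ_apply f, Function.iterate_succ_apply' g]
        _ = f^[n] (g^[n] u) := by rw [hfg (g^[n] u)]
        _ = u := ih u
  have key : ∀ (n k : ℕ) (w : X), f^[n] (g^[n + k] w) = g^[k] w := by
    intro n k w
    rw [Function.iterate_add_apply, hfgn]
  refine ⟨a, ?_⟩
  intro n
  have hcont : Continuous (f^[n]) := hf.continuous.iterate n
  have htend : Filter.Tendsto (fun j => f^[n] (g^[φ j] (x (φ j)))) Filter.atTop
      (nhds (f^[n] a)) := (hcont.tendsto a).comp hlim
  have hev : ∀ᶠ j in Filter.atTop, dist (f^[n] (g^[φ j] (x (φ j)))) (x n) ≤ δ := by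
    filter_upwards [Filter.eventually_ge_atTop n] with j hj
    have hnφ : n ≤ φ j := hj.trans hφ.le_apply
    obtain ⟨k, hk⟩ : ∃ k, φ j = n + k := ⟨φ j - n, (Nat.add_sub_cancel' hnφ).symm⟩
    rw [hk, key]
    exact (hB n k).le
  have hle : dist (f^[n] a) (x n) ≤ δ :=
    le_of_tendsto (htend.dist tendsto_const_nhds) hev
  exact hle.trans_lt hδε
end

section
/- Let X be a compact ultrametric space and f : X → X an eventual similarity, i.e., there exist ε > 0 and s > 0 such that d(x,y) < ε implies d(f(x), f(y)) = s·d(x,y). If f is invertible with uniformly continuous inverse (automatic when f is a homeomorphism of a compact space), then f has the shadowing property. -/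
/-- Let `X` be a compact ultrametric space and `f : X → X` an eventual similarity
(there are `ε > 0` and `s > 0` with `d(f(x), f(y)) = s·d(x,y)` whenever `d(x,y) < ε`).
If `f` is invertible with uniformly continuous inverse, then `f` has the shadowing property. -/
theorem shadowing_of_eventual_similarity {X : Type*} [MetricSpace X] [CompactSpace X]
    (hum : ∀ x y z : X, dist x z ≤ max (dist x y) (dist y z))
    (f g : X → X)
    (hgf : Function.LeftInverse g f) (hfg : Function.RightInverse g f)
    (hg : UniformContinuous g)
    (hsim : ∃ ε > (0 : ℝ), ∃ s > (0 : ℝ), ∀ x y : X,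
      dist x y < ε → dist (f x) (f y) = s * dist x y) :
    Shadowing f := by
  obtain ⟨ε₀, hε₀, s, hs, hsim⟩ := hsim
  intro ε hε
  rcases le_or_gt s 1 with hs1 | hs1
  · -- contraction case : shadow by the orbit of x 0
    refine ⟨min ε ε₀, lt_min hε hε₀, fun x hx => ⟨x 0, fun n => ?_⟩⟩
    have key : ∀ n, dist (f^[n] (x 0)) (x n) < min ε ε₀ := by
      intro n
      induction n with
      | zero => simpa using lt_min hε hε₀
      | succ n ih =>
        rw [Function.iterate_succ_apply']
        refine lt_of_le_of_lt (hum _ (f (x n)) _) (max_lt ?_ (hx n))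
        rw [hsim _ _ (lt_of_lt_of_le ih (min_le_right _ _))]
        exact lt_of_le_of_lt (mul_le_of_le_one_left dist_nonneg hs1) ih
    exact lt_of_lt_of_le (key n) (min_le_left _ _)
  · -- expansion case
    obtain ⟨η, hη, hgη⟩ := Metric.uniformContinuous_iff.mp hg ε₀ hε₀
    set δ : ℝ := min ε η / 2 with hδdef
    have hδ : 0 < δ := half_pos (lt_min hε hη)
    have hδε : δ < ε := by
      have h1 := min_le_left ε η
      rw [hδdef]; linarith
    have hδη : δ ≤ η := by
      have h1 := min_le_right ε η
      rw [hδdef]; linarith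
    -- g is a local contraction
    have hcontract : ∀ u v : X, dist u v < η → dist (g u) (g v) = dist u v / s := by
      intro u v h
      have h1 : dist (g u) (g v) < ε₀ := hgη h
      have h2 := hsim (g u) (g v) h1
      rw [hfg u, hfg v] at h2
      rw [h2, mul_div_cancel_left₀ _ (ne_of_gt hs)]
    have hcontract' : ∀ u v : X, dist u v < η → dist (g u) (g v) ≤ dist u v := by
      intro u v h
      rw [hcontract u v h]
      exact div_le_self dist_nonneg hs1.le
    have giter : ∀ k : ℕ, ∀ u v : X, dist u v < η →
        dist (g^[k] u) (g^[k] v) ≤ dist u v := by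
      intro k
      induction k with
      | zero => intro u v _; simp
      | succ k ih =>
        intro u v h
        rw [Function.iterate_succ_apply', Function.iterate_succ_apply']
        exact le_trans (hcontract' _ _ (lt_of_le_of_lt (ih u v h) h)) (ih u v h)
    refine ⟨δ, hδ, fun x hx => ?_⟩
    -- chain bound
    have chain : ∀ m n : ℕ, dist (g^[m] (x (n + m))) (x n) < δ := by
      intro m
      induction m with
      | zero => intro n; simpa using hδ
      | succ m ih =>
        intro n
        have hstep : dist (x (n + m)) (g (x (n + m + 1))) < δ := by
          have h1 : dist (f (x (n + m))) (x (n + m + 1)) < δ := hx (n + m)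
          have h2 := hcontract' _ _ (lt_of_lt_of_le h1 hδη)
          rw [hgf (x (n + m))] at h2
          exact lt_of_le_of_lt h2 h1
        have h3 : dist (g^[m] (x (n + m))) (g^[m] (g (x (n + m + 1)))) < δ :=
          lt_of_le_of_lt (giter m _ _ (lt_of_lt_of_le (dist_comm (x (n + m)) _ ▸ hstep) hδη))
            (dist_comm (x (n + m)) _ ▸ hstep)
        have h4 : g^[m + 1] (x (n + (m + 1))) = g^[m] (g (x (n + m + 1))) := by
          rw [Function.iterate_succ_apply]
          rfl
        rw [h4]
        refine lt_of_le_of_lt (hum _ (g^[m] (x (n + m))) _) (max_lt ?_ (ih n))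
        rw [dist_comm]
        exact h3
    -- f^[n] ∘ g^[n] = id
    have fgn : ∀ n : ℕ, ∀ w : X, f^[n] (g^[n] w) = w := by
      intro n
      induction n with
      | zero => intro w; simp
      | succ n ih =>
        intro w
        rw [Function.iterate_succ_apply' g, Function.iterate_succ_apply f,
          hfg (g^[n] w), ih]
    have key2 : ∀ n m : ℕ, n ≤ m → dist (f^[n] (g^[m] (x m))) (x n) < δ := by
      intro n m hnm
      obtain ⟨j, rfl⟩ := Nat.exists_eq_add_of_le hnm
      rw [Function.iterate_add_apply g n j, fgn n]
      exact chain j n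
    -- f is continuous
    have hfc : Continuous f := by
      refine Metric.uniformContinuous_iff.mpr (fun d hd => ?_) |>.continuous
      refine ⟨min ε₀ (d / s), lt_min hε₀ (div_pos hd hs), fun {a b} h => ?_⟩
      rw [hsim a b (lt_of_lt_of_le h (min_le_left _ _))]
      calc s * dist a b < s * (d / s) := by
            exact mul_lt_mul_of_pos_left (lt_of_lt_of_le h (min_le_right _ _)) hs
        _ = d := mul_div_cancel₀ d (ne_of_gt hs)
    -- compactness : extract a limit point of g^[m] (x m)
    obtain ⟨z, -, φ, hφ, hz⟩ :=
      isCompact_univ.tendsto_subseq (fun m => Set.mem_univ (g^[m] (x m)))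
    refine ⟨z, fun n => lt_of_le_of_lt ?_ hδε⟩
    have htend : Filter.Tendsto (fun k => dist (f^[n] (g^[φ k] (x (φ k)))) (x n))
        Filter.atTop (nhds (dist (f^[n] z) (x n))) :=
      (((hfc.iterate n).tendsto z).comp hz).dist tendsto_const_nhds
    refine le_of_tendsto htend ?_
    filter_upwards [Filter.eventually_ge_atTop n] with k hk
    exact (key2 n (φ k) (le_trans hk (hφ.le_apply))).le
end

section
/- Let (X,d) be an ultrametric space and f : X → X a surjective isometry. Then (X,d,f) has the two-sided shadowing property: for every ε > 0 there exists δ > 0 such that every bi-infinite sequence (xₙ)_{n∈ℤ} with d(f(xₙ), xₙ₊₁) < δ for all n ∈ ℤ satisfies d(fⁿ(x₀), xₙ) < ε for all n ∈ ℤ. In fact, one can take δ = ε and the shadowing point to be x₀ itself. -/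
/-- The bi-infinite iterate `fⁿ` for `n : ℤ`, where `g` is the inverse of `f`. -/
def zIter {X : Type*} (f g : X → X) (n : ℤ) (x : X) : X :=
  if 0 ≤ n then f^[n.toNat] x else g^[(-n).toNat] x

/-- Let `(X,d)` be an ultrametric space and `f` a surjective isometry (with inverse `g`).
Then `f` has the two-sided shadowing property; in fact one can take `δ = ε` and for every
two-sided `ε`-pseudo-orbit `(xₙ)_{n∈ℤ}` the point `x₀` itself `ε`-shadows it. -/
theorem twoSided_shadowing_of_surjective_isometry {X : Type*} [MetricSpace X]
    (hum : ∀ x y z : X, dist x z ≤ max (dist x y) (dist y z))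
    (f g : X → X) (hf : Isometry f) (hsurj : Function.Surjective f)
    (hgf : Function.LeftInverse g f) (hfg : Function.RightInverse g f) :
    ∀ ε > (0 : ℝ), ∀ x : ℤ → X,
      (∀ n : ℤ, dist (f (x n)) (x (n + 1)) < ε) →
      ∀ n : ℤ, dist (zIter f g n (x 0)) (x n) < ε := by
  intro ε hε x hx n
  have hgd : ∀ a b : X, dist (g a) (g b) = dist a b := by
    intro a b
    rw [← hf.dist_eq (g a) (g b), hfg a, hfg b]
  have hpos : ∀ k : ℕ, dist (f^[k] (x 0)) (x k) < ε := by
    intro k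
    induction k with
    | zero => simpa using hε
    | succ k ih =>
      have h1 : dist (f^[k+1] (x 0)) (f (x k)) = dist (f^[k] (x 0)) (x k) := by
        rw [Function.iterate_succ_apply', hf.dist_eq]
      have h2 := hx (k : ℤ)
      have hcast : ((k : ℤ) + 1) = ((k + 1 : ℕ) : ℤ) := by push_cast; ring
      rw [hcast] at h2
      calc dist (f^[k+1] (x 0)) (x (k+1 : ℕ))
          ≤ max (dist (f^[k+1] (x 0)) (f (x k))) (dist (f (x k)) (x (k+1 : ℕ))) :=
            hum _ _ _
        _ < ε := max_lt (h1 ▸ ih) h2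
  have hneg : ∀ k : ℕ, dist (g^[k] (x 0)) (x (-(k : ℤ))) < ε := by
    intro k
    induction k with
    | zero => simpa using hε
    | succ k ih =>
      have h1 : dist (g^[k+1] (x 0)) (g (x (-(k : ℤ)))) = dist (g^[k] (x 0)) (x (-(k : ℤ))) := by
        rw [Function.iterate_succ_apply', hgd]
      have h2 : dist (g (x (-(k : ℤ)))) (x (-(k+1 : ℕ) : ℤ)) < ε := by
        rw [← hf.dist_eq, hfg]
        have := hx (-(k+1 : ℕ) : ℤ)
        have hcast : (-(k+1 : ℕ) : ℤ) + 1 = -(k : ℤ) := by push_cast; ring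
        rw [hcast] at this
        rw [dist_comm]
        exact this
      calc dist (g^[k+1] (x 0)) (x (-(k+1 : ℕ) : ℤ))
          ≤ max (dist (g^[k+1] (x 0)) (g (x (-(k : ℤ)))))
              (dist (g (x (-(k : ℤ)))) (x (-(k+1 : ℕ) : ℤ))) := hum _ _ _
        _ < ε := max_lt (h1 ▸ ih) h2
  unfold zIter
  by_cases h : 0 ≤ n
  · rw [if_pos h]
    have := hpos n.toNat
    rwa [Int.toNat_of_nonneg h] at this
  · rw [if_neg h]
    have := hneg (-n).toNat
    have h' : (-((-n).toNat : ℤ)) = n := by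
      rw [Int.toNat_of_nonneg (by omega)]; ring
    rwa [h'] at this
end

section
/- Every 1-Lipschitz map f : ℤ_p → ℤ_p on the ring of p-adic integers with the p-adic metric has the shadowing property. Likewise, every 1-Lipschitz map f : ℚ_p → ℚ_p has the shadowing property. -/
theorem shadowing_of_ultra {X : Type*} [PseudoMetricSpace X] [IsUltrametricDist X]
    (f : X → X) (hf : ∀ x y, dist (f x) (f y) ≤ dist x y) : Shadowing f := by
  intro ε hε
  refine ⟨ε, hε, fun x hx => ⟨x 0, fun n => ?_⟩⟩
  induction n with
  | zero => simpa using hε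
  | succ n ih =>
    calc dist (f^[n+1] (x 0)) (x (n+1))
        ≤ max (dist (f^[n+1] (x 0)) (f (x n))) (dist (f (x n)) (x (n+1))) :=
          IsUltrametricDist.dist_triangle_max _ _ _
      _ < ε := by
          apply max_lt _ (hx n)
          rw [Function.iterate_succ_apply']
          exact lt_of_le_of_lt (hf _ _) ih

/-- Every 1-Lipschitz map on the `p`-adic integers `ℤ_p`, and every 1-Lipschitz map on the
`p`-adic numbers `ℚ_p`, has the shadowing property. -/
theorem shadowing_of_one_lipschitz_padic (p : ℕ) [Fact p.Prime] :
    (∀ f : ℤ_[p] → ℤ_[p], (∀ x y, dist (f x) (f y) ≤ dist x y) → Shadowing f) ∧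
    (∀ f : ℚ_[p] → ℚ_[p], (∀ x y, dist (f x) (f y) ≤ dist x y) → Shadowing f) := by
  exact ⟨fun f hf => shadowing_of_ultra f hf, fun f hf => shadowing_of_ultra f hf⟩
end
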